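/- arXiv:1611.05518 — 2 statements merged into one kernel-verified Lean document; each statement's English description precedes it below -/
import Mathlib

section
/- Let σ₁, σ₂ > 0, U > 0 and 0 < K ≤ U, and let 𝐊 = U + (U − K)·σ₂/σ₁. Then P^σ(U,K,τ) is asymptotically equivalent to C^σ(U,𝐊,τ) as τ → 0+, i.e. lim_{τ→0+} P^σ(U,K,τ) / C^σ(U,𝐊,τ) = 1. -/
open MeasureTheory Filter Set

/-- Standard normal cumulative distribution function. -/
noncomputable def stdNormalCDF (x : ℝ) : ℝ :=
  (Real.sqrt (2 * Real.pi))⁻¹ * ∫ y in Set.Iic x, Real.exp (-(y ^ 2) / 2)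

/-- Black–Scholes call price with zero interest and dividend rates. -/
noncomputable def bsCall (S K τ σ : ℝ) : ℝ :=
  let d1 := (Real.log (S / K) + σ ^ 2 * τ / 2) / (σ * Real.sqrt τ)
  S * stdNormalCDF d1 - K * stdNormalCDF (d1 - σ * Real.sqrt τ)

/-- Black–Scholes put price with zero interest and dividend rates. -/
noncomputable def bsPut (S K τ σ : ℝ) : ℝ := bsCall S K τ σ - S + K

/-- The denominator appearing in the PCLVG call price formula. -/
noncomputable def pclvgD (σ1 σ2 U τ : ℝ) : ℝ :=
  1 / σ1 + 1 / σ2 - (1 / σ2 - 1 / σ1) * Real.exp (-2 * U / (σ1 * τ))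

/-- The explicit PCLVG call price `C^σ(U,K,τ)`. -/
noncomputable def pclvgCall (σ1 σ2 U K τ : ℝ) : ℝ :=
  if K < U then
    (U - K) +
      τ * Real.exp (-(U - K) / (σ1 * τ)) * (1 - Real.exp (-2 * K / (σ1 * τ))) /
        pclvgD σ1 σ2 U τ
  else
    τ * Real.exp (-(K - U) / (σ2 * τ)) * (1 - Real.exp (-2 * U / (σ1 * τ))) /
      pclvgD σ1 σ2 U τ

/-- The PCLVG put price `P^σ(U,K,τ) = C^σ(U,K,τ) − (U − K)`. -/
noncomputable def pclvgPut (σ1 σ2 U K τ : ℝ) : ℝ := pclvgCall σ1 σ2 U K τ - (U - K)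

/-!
For `K ≤ U` the put and the call at the mirrored strike `𝐊` carry the same exponential factor
`exp (-(U - K) / (σ₁ τ))`, because `(𝐊 - U) / σ₂ = (U - K) / σ₁`. Their ratio is therefore exactly
`(1 - exp (-2K / (σ₁ τ))) / (1 - exp (-2U / (σ₁ τ)))`, and both exponentials vanish as `τ → 0+`.
-/

open Real Topology

lemma tendsto_exp_div_nhdsGT_zero {c : ℝ} (hc : c < 0) :
    Tendsto (fun τ : ℝ => exp (c / τ)) (𝓝[>] 0) (𝓝 0) :=
  tendsto_exp_atBot.comp (tendsto_inv_nhdsGT_zero.const_mul_atTop_of_neg hc)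

lemma pclvgD_pos {σ1 σ2 U τ : ℝ} (h1 : 0 < σ1) (h2 : 0 < σ2) (hU : 0 ≤ U) (hτ : 0 ≤ τ) :
    0 < pclvgD σ1 σ2 U τ := by
  have he : exp (-2 * U / (σ1 * τ)) ≤ 1 :=
    exp_le_one_iff.2 (div_nonpos_of_nonpos_of_nonneg (by linarith) (by positivity))
  have hsplit : pclvgD σ1 σ2 U τ
      = 1 / σ1 * (1 + exp (-2 * U / (σ1 * τ))) + 1 / σ2 * (1 - exp (-2 * U / (σ1 * τ))) := by
    unfold pclvgD; ring
  rw [hsplit]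
  exact add_pos_of_pos_of_nonneg (by positivity) (mul_nonneg (by positivity) (sub_nonneg.2 he))

lemma pclvgPut_of_le {σ1 σ2 U K τ : ℝ} (hKU : K ≤ U) :
    pclvgPut σ1 σ2 U K τ
      = τ * exp (-(U - K) / (σ1 * τ)) * (1 - exp (-2 * K / (σ1 * τ))) / pclvgD σ1 σ2 U τ := by
  unfold pclvgPut pclvgCall
  rcases hKU.lt_or_eq with hlt | rfl
  · rw [if_pos hlt]; ring
  · simp

lemma pclvgCall_mirror_strike {σ1 σ2 U K τ : ℝ} (h1 : 0 < σ1) (h2 : 0 < σ2) (hKU : K ≤ U) :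
    pclvgCall σ1 σ2 U (U + (U - K) * σ2 / σ1) τ
      = τ * exp (-(U - K) / (σ1 * τ)) * (1 - exp (-2 * U / (σ1 * τ))) / pclvgD σ1 σ2 U τ := by
  have hmirror : 0 ≤ (U - K) * σ2 / σ1 := by
    have : 0 ≤ U - K := sub_nonneg.2 hKU
    positivity
  have hexponent : -(U + (U - K) * σ2 / σ1 - U) / (σ2 * τ) = -(U - K) / (σ1 * τ) := by
    rw [add_sub_cancel_left]
    field_simp
  unfold pclvgCall
  rw [if_neg (not_lt.2 (le_add_of_nonneg_right hmirror)), hexponent]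

/-- Asymptotic equivalence of the OTM put price and the single-call price with
strike `𝐊 = U + (U−K)σ₂/σ₁` as `τ → 0+`: the ratio tends to `1`. -/
theorem pclvg_put_call_asymptotic_equiv (σ1 σ2 U K : ℝ)
    (h1 : 0 < σ1) (h2 : 0 < σ2) (hU : 0 < U) (hK : 0 < K) (hKU : K ≤ U) :
    Filter.Tendsto
      (fun τ : ℝ => pclvgPut σ1 σ2 U K τ / pclvgCall σ1 σ2 U (U + (U - K) * σ2 / σ1) τ)
      (nhdsWithin 0 (Set.Ioi 0)) (nhds 1) := by
  have hexp {c : ℝ} (hc : 0 < c) :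
      Tendsto (fun τ : ℝ => exp (-2 * c / (σ1 * τ))) (𝓝[>] 0) (𝓝 0) := by
    simpa only [div_mul_eq_div_div] using tendsto_exp_div_nhdsGT_zero (c := -2 * c / σ1)
      (div_neg_of_neg_of_pos (by linarith) h1)
  have hratio : Tendsto (fun τ : ℝ => (1 - exp (-2 * K / (σ1 * τ))) / (1 - exp (-2 * U / (σ1 * τ))))
      (𝓝[>] 0) (𝓝 1) := by
    simpa only [sub_zero, div_one, Pi.div_def] using
      (tendsto_const_nhds.sub (hexp hK)).div (tendsto_const_nhds.sub (hexp hU))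
        (by norm_num : (1 : ℝ) - 0 ≠ 0)
  refine hratio.congr' ?_
  filter_upwards [self_mem_nhdsWithin] with τ (hτ : 0 < τ)
  have hD := pclvgD_pos h1 h2 hU.le hτ.le
  have hfactor : τ * exp (-(U - K) / (σ1 * τ)) ≠ 0 := by positivity
  rw [pclvgPut_of_le hKU, pclvgCall_mirror_strike h1 h2 hKU, div_div_div_cancel_right₀ hD.ne',
    mul_div_mul_left _ _ hfactor]
end

section
/- Fix strikes 0 < K_1 < … < K_N and a barrier U > 0. Let σ_* = (σ_{*1}, σ_{*2}) and σ^* = (σ^*_1, σ^*_2) be pairs of positive numbers, and suppose there are indices i, j with K_i < U and U + (U−K_i)·σ^*_2/σ^*_1 < K_j ≤ U + (U−K_i)·σ_{*2}/σ_{*1} (in particular j̲ = max{ j : U < K_j ≤ U + (U−K_i)·σ_{*2}/σ_{*1} } is well defined). Let Σ^{σ^*} be the PCLVG implied volatility surface for σ^*. Let T > 0, let S = U, and let Σ : {K_1,…,K_N} × (0,T] → (0,∞) satisfy the upper beliefs generated by Σ^{σ^*} on (0,T]. Then there exists T' ∈ (0,T] such that for all τ ∈ (0,T'], the risk-reversal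 portfolio has a strictly negative price: C^bs(U, K_{j̲}, τ, Σ(K_{j̲},τ)) − P^bs(U, K_i, τ, Σ(K_i,τ)) < 0. -/
open MeasureTheory Filter Set

/-!
At short maturity the PCLVG prices of an out-of-the-money call at `K_j > U` and of an
out-of-the-money put at `K_i < U` are, up to the common factor `τ / D(τ)`, of order
`exp (-(K_j - U) / (σ₂ τ))` and `exp (-(U - K_i) / (σ₁ τ))`. The strike condition for `σ^*`
says exactly that the call exponent is the larger one, so the model risk reversal is negative
for small `τ`. The Black–Scholes price depends on `(σ, τ)` only through `σ √τ` and increases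
with it, so the upper beliefs bound the market call from above and the market put from below by
the model prices at maturity `c² τ`.
-/

open Real Topology

noncomputable def stdNormalPDF (x : ℝ) : ℝ :=
  (√(2 * π))⁻¹ * exp (-(x ^ 2) / 2)

lemma stdNormalPDF_pos (x : ℝ) : 0 < stdNormalPDF x := by
  unfold stdNormalPDF
  have := pi_pos
  positivity

lemma integrable_exp_neg_sq_div_two : Integrable (fun y : ℝ => exp (-(y ^ 2) / 2)) volume := by
  convert integrable_exp_neg_mul_sq (by norm_num : (0 : ℝ) < 1 / 2) using 3
  ring

lemma hasDerivAt_stdNormalCDF (x : ℝ) : HasDerivAt stdNormalCDF (stdNormalPDF x) x := by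
  set g : ℝ → ℝ := fun y => exp (-(y ^ 2) / 2)
  have hg : Integrable g := integrable_exp_neg_sq_div_two
  have hcont : Continuous g := by fun_prop
  have hsplit : stdNormalCDF =
      fun u => (√(2 * π))⁻¹ * ((∫ y in Iic 0, g y) + ∫ y in (0 : ℝ)..u, g y) := by
    funext u
    rw [stdNormalCDF, ← intervalIntegral.integral_Iic_sub_Iic hg.integrableOn hg.integrableOn]
    ring
  rw [hsplit]
  have hftc : HasDerivAt (fun u => ∫ y in (0 : ℝ)..u, g y) (g x) x :=
    intervalIntegral.integral_hasDerivAt_right hg.intervalIntegrable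
      hcont.aestronglyMeasurable.stronglyMeasurableAtFilter hcont.continuousAt
  exact (hftc.const_add _).const_mul _

lemma stdNormalPDF_sub_half (a : ℝ) {v : ℝ} (hv : v ≠ 0) :
    stdNormalPDF (a / v - v / 2) = exp a * stdNormalPDF (a / v + v / 2) := by
  unfold stdNormalPDF
  rw [mul_left_comm, ← exp_add]
  congr 2
  field_simp
  ring

noncomputable def bsCallTotalVol (S K v : ℝ) : ℝ :=
  S * stdNormalCDF (log (S / K) / v + v / 2) - K * stdNormalCDF (log (S / K) / v - v / 2)

/-- Vega: the two `v`-derivatives of the arguments of `N` cancel by `K φ(d₂) = S φ(d₁)`. -/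
lemma hasDerivAt_bsCallTotalVol {S K v : ℝ} (hS : 0 < S) (hK : 0 < K) (hv : v ≠ 0) :
    HasDerivAt (bsCallTotalVol S K) (S * stdNormalPDF (log (S / K) / v + v / 2)) v := by
  set l := log (S / K)
  have hd : HasDerivAt (fun v : ℝ => l / v) (-l / v ^ 2) v := by
    simpa [div_eq_mul_inv, neg_div] using (hasDerivAt_inv hv).const_mul l
  have hhalf : HasDerivAt (fun v : ℝ => v / 2) (1 / 2) v := (hasDerivAt_id v).div_const 2
  have hraw : HasDerivAt (bsCallTotalVol S K)
      (S * (stdNormalPDF (l / v + v / 2) * (-l / v ^ 2 + 1 / 2)) -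
        K * (stdNormalPDF (l / v - v / 2) * (-l / v ^ 2 - 1 / 2))) v :=
    (((hasDerivAt_stdNormalCDF _).comp v (hd.add hhalf)).const_mul S).sub
      (((hasDerivAt_stdNormalCDF _).comp v (hd.sub hhalf)).const_mul K)
  have hvega : K * stdNormalPDF (l / v - v / 2) = S * stdNormalPDF (l / v + v / 2) := by
    rw [stdNormalPDF_sub_half l hv, exp_log (div_pos hS hK)]
    field_simp
  exact hraw.congr_deriv (by linear_combination (l / v ^ 2 + 1 / 2) * hvega)

lemma bsCallTotalVol_strictMonoOn {S K : ℝ} (hS : 0 < S) (hK : 0 < K) :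
    StrictMonoOn (bsCallTotalVol S K) (Ioi 0) := by
  apply strictMonoOn_of_deriv_pos (convex_Ioi 0)
  · exact fun v hv =>
      (hasDerivAt_bsCallTotalVol hS hK (ne_of_gt hv)).continuousAt.continuousWithinAt
  · intro v hv
    rw [interior_Ioi] at hv
    rw [(hasDerivAt_bsCallTotalVol hS hK (ne_of_gt hv)).deriv]
    exact mul_pos hS (stdNormalPDF_pos _)

lemma bsCall_eq_bsCallTotalVol (S K σ : ℝ) {τ : ℝ} (hτ : 0 ≤ τ) :
    bsCall S K τ σ = bsCallTotalVol S K (σ * √τ) := by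
  have hd₁ : ∀ l v : ℝ, (l + v ^ 2 / 2) / v = l / v + v / 2 := by
    intro l v
    rcases eq_or_ne v 0 with rfl | hv
    · simp
    · field_simp
  have hsq : σ ^ 2 * τ = (σ * √τ) ^ 2 := by rw [mul_pow, sq_sqrt hτ]
  simp only [bsCall, bsCallTotalVol, hsq, hd₁]
  ring_nf

lemma bsCall_strictMonoOn {S K τ : ℝ} (hS : 0 < S) (hK : 0 < K) (hτ : 0 < τ) :
    StrictMonoOn (bsCall S K τ) (Ioi 0) := by
  have hsqrt : 0 < √τ := sqrt_pos.2 hτ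
  have hscale : StrictMonoOn (fun σ => σ * √τ) (Ioi 0) :=
    fun _ _ _ _ h => mul_lt_mul_of_pos_right h hsqrt
  have := (bsCallTotalVol_strictMonoOn hS hK).comp hscale fun σ (hσ : 0 < σ) => mul_pos hσ hsqrt
  simpa only [Function.comp_def, ← bsCall_eq_bsCallTotalVol S K _ hτ.le] using this

lemma bsCall_mul_vol (S K σ : ℝ) {τ c : ℝ} (hτ : 0 ≤ τ) (hc : 0 ≤ c) :
    bsCall S K τ (c * σ) = bsCall S K (c ^ 2 * τ) σ := by
  rw [bsCall_eq_bsCallTotalVol S K _ hτ, bsCall_eq_bsCallTotalVol S K _ (by positivity),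
    sqrt_mul (sq_nonneg c), sqrt_sq hc]
  ring_nf

lemma pclvgD_pos_s17 {σ₁ σ₂ U τ : ℝ} (hσ₁ : 0 < σ₁) (hσ₂ : 0 < σ₂) (hU : 0 < U) (hτ : 0 < τ) :
    0 < pclvgD σ₁ σ₂ U τ := by
  have hexp : exp (-2 * U / (σ₁ * τ)) < 1 :=
    exp_lt_one_iff.2 (div_neg_of_neg_of_pos (by linarith) (by positivity))
  have := exp_pos (-2 * U / (σ₁ * τ))
  have : 0 < 1 / σ₁ := by positivity
  have : 0 < 1 / σ₂ := by positivity
  unfold pclvgD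
  nlinarith

lemma tendsto_exp_neg_div_nhdsGT_zero {a : ℝ} (ha : 0 < a) :
    Tendsto (fun s => exp (-(a / s))) (𝓝[>] 0) (𝓝 0) := by
  have : Tendsto (fun s : ℝ => a / s) (𝓝[>] 0) atTop := by
    simpa only [div_eq_mul_inv] using tendsto_inv_nhdsGT_zero.const_mul_atTop ha
  exact tendsto_exp_atBot.comp (tendsto_neg_atTop_atBot.comp this)

lemma pclvgCall_lt_pclvgPut_eventually {σ₁ σ₂ U Ki Kj : ℝ} (hσ₁ : 0 < σ₁) (hσ₂ : 0 < σ₂)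
    (hKi : 0 < Ki) (hi : Ki < U) (hj : U + (U - Ki) * σ₂ / σ₁ < Kj) :
    ∀ᶠ s in 𝓝[>] 0, pclvgCall σ₁ σ₂ U Kj s < pclvgPut σ₁ σ₂ U Ki s := by
  set a := (Kj - U) / σ₂
  set b := (U - Ki) / σ₁
  set m := 2 * Ki / σ₁
  have hba : b < a := by
    rw [div_lt_div_iff₀ hσ₁ hσ₂]
    have := (div_lt_iff₀ hσ₁).1 (show (U - Ki) * σ₂ / σ₁ < Kj - U by linarith)
    linarith
  have hU : 0 < U := hKi.trans hi
  have hUKj : ¬Kj < U := not_lt.2 <| by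
    have : 0 ≤ (U - Ki) * σ₂ / σ₁ := by have := sub_pos.2 hi; positivity
    linarith
  have hsmall : ∀ x, 0 < x → ∀ᶠ s in 𝓝[>] (0 : ℝ), exp (-(x / s)) < 1 / 2 := fun x hx =>
    (tendsto_exp_neg_div_nhdsGT_zero hx).eventually (gt_mem_nhds (by norm_num))
  filter_upwards [hsmall (a - b) (by linarith), hsmall m (by positivity), self_mem_nhdsWithin]
    with s hab hm (hs : 0 < s)
  have hexp : ∀ x y : ℝ, -x / (y * s) = -(x / y / s) := fun x y => by
    rw [neg_div, div_mul_eq_div_div]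
  have hexp_m : -2 * Ki / (σ₁ * s) = -(m / s) := by rw [neg_mul, hexp]
  rw [pclvgPut, pclvgCall, pclvgCall, if_neg hUKj, if_pos hi, add_sub_cancel_left,
    hexp, hexp (U - Ki), hexp_m]
  have hfactor : exp (-(a / s)) = exp (-(b / s)) * exp (-((a - b) / s)) := by
    rw [← exp_add]
    ring_nf
  have hb := exp_pos (-(b / s))
  have hcall : exp (-(a / s)) * (1 - exp (-2 * U / (σ₁ * s))) <
      exp (-(b / s)) * (1 - exp (-(m / s))) :=
    calc exp (-(a / s)) * (1 - exp (-2 * U / (σ₁ * s)))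
        ≤ exp (-(a / s)) :=
          mul_le_of_le_one_right (exp_pos _).le (by linarith [exp_pos (-2 * U / (σ₁ * s))])
      _ = exp (-(b / s)) * exp (-((a - b) / s)) := hfactor
      _ < exp (-(b / s)) * (1 - exp (-(m / s))) := by gcongr; linarith
  gcongr ?_ / _
  · exact pclvgD_pos_s17 hσ₁ hσ₂ hU hs
  · simpa only [mul_assoc] using mul_lt_mul_of_pos_left hcall hs

theorem rtis_negative_price_general (n : ℕ) (K : Fin n → ℝ)
    (hKpos : ∀ j, 0 < K j)
    (U : ℝ) (hU : 0 < U)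
    (σl1 σl2 : ℝ)
    (σu1 σu2 : ℝ) (hu1 : 0 < σu1) (hu2 : 0 < σu2)
    (i j : Fin n) (hi : K i < U)
    (hj1 : U + (U - K i) * σu2 / σu1 < K j)
    (hj2 : K j ≤ U + (U - K i) * σl2 / σl1)
    (jlo : Fin n)
    (hjlo1 : U < K jlo)
    (hjlo3 : ∀ j', U < K j' → K j' ≤ U + (U - K i) * σl2 / σl1 → K j' ≤ K jlo)
    (IVstar : ℝ → ℝ → ℝ)
    (hIVstar : ∀ K' τ : ℝ, 0 < K' → 0 < τ → 0 < IVstar K' τ ∧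
      bsCall U K' τ (IVstar K' τ) = pclvgCall σu1 σu2 U K' τ)
    (T : ℝ) (hT : 0 < T)
    (IV : Fin n → ℝ → ℝ) (hIVpos : ∀ j' τ, 0 < τ → τ ≤ T → 0 < IV j' τ)
    (hbeliefs : ∃ c : ℝ, 0 < c ∧ ∀ τ : ℝ, 0 < τ → τ ≤ T →
      (∀ i', K i' < U → c * IVstar (K i') (c ^ 2 * τ) ≤ IV i' τ) ∧
      (∀ j', U < K j' → IV j' τ ≤ c * IVstar (K j') (c ^ 2 * τ))) :
    ∃ T' : ℝ, 0 < T' ∧ T' ≤ T ∧ ∀ τ : ℝ, 0 < τ → τ ≤ T' →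
      bsCall U (K jlo) τ (IV jlo τ) - bsPut U (K i) τ (IV i τ) < 0 := by
  obtain ⟨c, hc, hbel⟩ := hbeliefs
  have hjlo : U + (U - K i) * σu2 / σu1 < K jlo := by
    have : 0 ≤ (U - K i) * σu2 / σu1 := by have := sub_pos.2 hi; positivity
    exact hj1.trans_le (hjlo3 j (by linarith) hj2)
  have hmodel := eventually_nhdsGT_zero_mul_left (pow_pos hc 2)
    (pclvgCall_lt_pclvgPut_eventually hu1 hu2 (hKpos i) hi hjlo)
  obtain ⟨u, hu, hmodel⟩ := mem_nhdsGT_iff_exists_Ioc_subset.1 hmodel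
  refine ⟨min T u, lt_min hT hu, min_le_left _ _, fun τ hτ hτT' => ?_⟩
  have hτT : τ ≤ T := hτT'.trans (min_le_left _ _)
  have hlt : pclvgCall σu1 σu2 U (K jlo) (c ^ 2 * τ) < pclvgPut σu1 σu2 U (K i) (c ^ 2 * τ) :=
    hmodel ⟨hτ, hτT'.trans (min_le_right _ _)⟩
  obtain ⟨hbi, hbj⟩ := hbel τ hτ hτT
  obtain ⟨hσi, hCi⟩ := hIVstar (K i) (c ^ 2 * τ) (hKpos i) (by positivity)
  obtain ⟨hσj, hCj⟩ := hIVstar (K jlo) (c ^ 2 * τ) (hKpos jlo) (by positivity)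
  have hcall : bsCall U (K jlo) τ (IV jlo τ) ≤ pclvgCall σu1 σu2 U (K jlo) (c ^ 2 * τ) := by
    rw [← hCj, ← bsCall_mul_vol _ _ _ hτ.le hc.le]
    exact (bsCall_strictMonoOn hU (hKpos jlo) hτ).monotoneOn (hIVpos jlo τ hτ hτT)
      (mul_pos hc hσj) (hbj jlo hjlo1)
  have hput : pclvgCall σu1 σu2 U (K i) (c ^ 2 * τ) ≤ bsCall U (K i) τ (IV i τ) := by
    rw [← hCi, ← bsCall_mul_vol _ _ _ hτ.le hc.le]
    exact (bsCall_strictMonoOn hU (hKpos i) hτ).monotoneOn (mul_pos hc hσi)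
      (hIVpos i τ hτ hτT) (hbi i hi)
  rw [pclvgPut] at hlt
  rw [bsPut]
  linarith

/-- Second defining property of the RTIS portfolio (Proposition 5.2 of the
paper): if the market implied volatility satisfies the upper beliefs generated by a PCLVG
surface with lower skewness (in the sense of the strike condition
`U + (U−K_i)σ*₂/σ*₁ < K_j ≤ U + (U−K_i)σ_{*2}/σ_{*1}`), and the spot is at the barrier, then
the risk-reversal portfolio has a strictly negative price for all sufficiently small
maturities. -/
theorem rtis_negative_price (n : ℕ) (K : Fin n → ℝ)
    (hKpos : ∀ j, 0 < K j) (hKmono : StrictMono K)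
    (U : ℝ) (hU : 0 < U)
    (σl1 σl2 : ℝ) (hl1 : 0 < σl1) (hl2 : 0 < σl2)
    (σu1 σu2 : ℝ) (hu1 : 0 < σu1) (hu2 : 0 < σu2)
    (i j : Fin n) (hi : K i < U)
    (hj1 : U + (U - K i) * σu2 / σu1 < K j)
    (hj2 : K j ≤ U + (U - K i) * σl2 / σl1)
    (jlo : Fin n)
    (hjlo1 : U < K jlo) (hjlo2 : K jlo ≤ U + (U - K i) * σl2 / σl1)
    (hjlo3 : ∀ j', U < K j' → K j' ≤ U + (U - K i) * σl2 / σl1 → K j' ≤ K jlo)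
    (IVstar : ℝ → ℝ → ℝ)
    (hIVstar : ∀ K' τ : ℝ, 0 < K' → 0 < τ → 0 < IVstar K' τ ∧
      bsCall U K' τ (IVstar K' τ) = pclvgCall σu1 σu2 U K' τ)
    (T : ℝ) (hT : 0 < T)
    (IV : Fin n → ℝ → ℝ) (hIVpos : ∀ j' τ, 0 < τ → τ ≤ T → 0 < IV j' τ)
    (hbeliefs : ∃ c : ℝ, 0 < c ∧ ∀ τ : ℝ, 0 < τ → τ ≤ T →
      (∀ i', K i' < U → c * IVstar (K i') (c ^ 2 * τ) ≤ IV i' τ) ∧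
      (∀ j', U < K j' → IV j' τ ≤ c * IVstar (K j') (c ^ 2 * τ))) :
    ∃ T' : ℝ, 0 < T' ∧ T' ≤ T ∧ ∀ τ : ℝ, 0 < τ → τ ≤ T' →
      bsCall U (K jlo) τ (IV jlo τ) - bsPut U (K i) τ (IV i τ) < 0 :=
  rtis_negative_price_general n K hKpos U hU σl1 σl2 σu1 σu2 hu1 hu2 i j hi hj1 hj2 jlo hjlo1 hjlo3
    IVstar hIVstar T hT IV hIVpos hbeliefs
end
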